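/- arXiv:2303.12287 — 2 statements merged into one kernel-verified Lean document; each statement's English description precedes it below -/
import Mathlib

section
/- In the realizable setting, the predictions of Vovk's aggregating algorithm converge to the true conditional distributions in total variation on average: if there exists an expert i* ∈ I such that conditionally on the history and context x^t, the outcome y^t is distributed as p_{i*}(x^t), then E[∑_{t=1}^T TV(q̂^t, p_{i*}(x^t))] ≤ sqrt(T · log|I|), where q̂^t are the predictions of Vovk's aggregating algorithm. -/
/-!
Let `D_t` be the divergence `KL(p_{i*}(x^t) ‖ q̂^t)`. Bounding total variation by the Hellinger
distance and the latter by `log x ≤ x - 1` gives `TV ≤ √D_t`. Because `q̂^t` is a function of the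
past, the tower property turns `E ∑ D_t` into the expected log-loss regret of the aggregating
algorithm against `i*`; the mixture losses telescope, so this regret is at most `log |I|` on every
path. Cauchy–Schwarz gives `E ∑ √D_t ≤ √(T · E ∑ D_t)`.
-/

/-- Total variation distance between two distributions on a finite set,
expressed as half the ℓ₁ distance. -/
noncomputable def tvDist {Y : Type} [Fintype Y] (p q : Y → ℝ) : ℝ :=
  (∑ y : Y, |p y - q y|) / 2

open Finset Real

theorem sum_mul_sqrt_le_sqrt_sum_mul_sum {ι : Type*} (s : Finset ι) {w z : ι → ℝ}
    (hw : ∀ i, 0 ≤ w i) (hz : ∀ i, 0 ≤ z i) :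
    ∑ i ∈ s, w i * √(z i) ≤ √((∑ i ∈ s, w i) * ∑ i ∈ s, w i * z i) := by
  have h := sum_sqrt_mul_sqrt_le s hw fun i => mul_nonneg (hw i) (hz i)
  simp only [sqrt_mul (hw _), ← mul_assoc, mul_self_sqrt (hw _)] at h
  rwa [sqrt_mul (sum_nonneg fun i _ => hw i)]

section Divergences

variable {Y : Type} [Fintype Y]

noncomputable def discreteKL (a b : Y → ℝ) : ℝ :=
  ∑ y, a y * (log (a y) - log (b y))

theorem tvDist_comm (a b : Y → ℝ) : tvDist a b = tvDist b a := by
  simp only [tvDist, abs_sub_comm]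

theorem tvDist_le_sqrt_sum_sq_sqrt_sub {a b : Y → ℝ} (ha : ∀ y, 0 ≤ a y) (hb : ∀ y, 0 ≤ b y)
    (ha1 : ∑ y, a y = 1) (hb1 : ∑ y, b y = 1) :
    tvDist a b ≤ √(∑ y, (√(a y) - √(b y)) ^ 2) := by
  have hdiff : ∀ y, |a y - b y| = |√(a y) - √(b y)| * (√(a y) + √(b y)) := fun y => by
    rw [← abs_of_nonneg (by positivity : 0 ≤ √(a y) + √(b y)), ← abs_mul]
    congr 1
    linear_combination sq_sqrt (hb y) - sq_sqrt (ha y)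
  have hsum : ∑ y, (√(a y) + √(b y)) ^ 2 ≤ 4 := calc
    ∑ y, (√(a y) + √(b y)) ^ 2 ≤ ∑ y, 2 * (a y + b y) := sum_le_sum fun y _ => by
      nlinarith [sq_nonneg (√(a y) - √(b y)), sq_sqrt (ha y), sq_sqrt (hb y)]
    _ = 4 := by rw [← mul_sum, sum_add_distrib, ha1, hb1]; norm_num
  have hcs := sum_mul_le_sqrt_mul_sqrt univ (fun y => |√(a y) - √(b y)|) (fun y => √(a y) + √(b y))
  simp only [sq_abs, ← hdiff] at hcs
  have h4 : √(∑ y, (√(a y) + √(b y)) ^ 2) ≤ 2 := by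
    rw [show (2 : ℝ) = √4 by rw [show (4 : ℝ) = 2 ^ 2 by norm_num, sqrt_sq zero_le_two]]
    exact sqrt_le_sqrt hsum
  rw [tvDist]
  nlinarith [sqrt_nonneg (∑ y, (√(a y) - √(b y)) ^ 2)]

/-- The pointwise form of `log x ≤ x - 1` at `x = √(b / a)`. -/
theorem two_mul_sub_sqrt_mul_sqrt_le {a b : ℝ} (ha : 0 < a) (hb : 0 < b) :
    2 * (a - √a * √b) ≤ a * (log a - log b) := by
  have hsa := sqrt_pos.2 ha
  have hlog : log (√b / √a) = (log b - log a) / 2 := by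
    rw [log_div (sqrt_pos.2 hb).ne' hsa.ne', log_sqrt hb.le, log_sqrt ha.le]; ring
  have h := log_le_sub_one_of_pos (div_pos (sqrt_pos.2 hb) hsa)
  rw [hlog] at h
  have e : a * (√b / √a) = √a * √b := by
    field_simp; rw [sq_sqrt ha.le]
  nlinarith

theorem sum_sq_sqrt_sub_le_discreteKL {a b : Y → ℝ} (ha : ∀ y, 0 < a y) (hb : ∀ y, 0 < b y)
    (ha1 : ∑ y, a y = 1) (hb1 : ∑ y, b y = 1) :
    ∑ y, (√(a y) - √(b y)) ^ 2 ≤ discreteKL a b := calc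
  ∑ y, (√(a y) - √(b y)) ^ 2 = ∑ y, 2 * (a y - √(a y) * √(b y)) + (∑ y, b y - ∑ y, a y) := by
    rw [← sum_sub_distrib, ← sum_add_distrib]
    refine sum_congr rfl fun y _ => ?_
    linear_combination sq_sqrt (ha y).le + sq_sqrt (hb y).le
  _ ≤ discreteKL a b := by
    rw [ha1, hb1, sub_self, add_zero]
    exact sum_le_sum fun y _ => two_mul_sub_sqrt_mul_sqrt_le (ha y) (hb y)

theorem tvDist_le_sqrt_discreteKL {a b : Y → ℝ} (ha : ∀ y, 0 < a y) (hb : ∀ y, 0 < b y)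
    (ha1 : ∑ y, a y = 1) (hb1 : ∑ y, b y = 1) :
    tvDist a b ≤ √(discreteKL a b) :=
  (tvDist_le_sqrt_sum_sq_sqrt_sub (fun y => (ha y).le) (fun y => (hb y).le) ha1 hb1).trans
    (sqrt_le_sqrt (sum_sq_sqrt_sub_le_discreteKL ha hb ha1 hb1))

theorem discreteKL_nonneg {a b : Y → ℝ} (ha : ∀ y, 0 < a y) (hb : ∀ y, 0 < b y)
    (ha1 : ∑ y, a y = 1) (hb1 : ∑ y, b y = 1) : 0 ≤ discreteKL a b :=
  (sum_nonneg fun _ _ => sq_nonneg _).trans (sum_sq_sqrt_sub_le_discreteKL ha hb ha1 hb1)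

end Divergences

section PrefixProd

variable {T : ℕ}

noncomputable def prefixProd (f : Fin T → ℝ) (n : ℕ) : ℝ :=
  ∏ s ∈ univ.filter (fun s : Fin T => (s : ℕ) < n), f s

theorem prefixProd_zero (f : Fin T → ℝ) : prefixProd f 0 = 1 := by
  simp [prefixProd]

theorem prefixProd_top (f : Fin T → ℝ) : prefixProd f T = ∏ s, f s := by
  simp [prefixProd]

theorem prefixProd_succ (f : Fin T → ℝ) (t : Fin T) :
    prefixProd f (t + 1) = prefixProd f t * f t := by
  rw [prefixProd, prefixProd, mul_comm, ← prod_insert (by simp)]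
  congr 1
  ext s
  simp only [mem_insert, mem_filter, mem_univ, true_and, Fin.ext_iff]
  omega

theorem prefixProd_congr {f g : Fin T → ℝ} {n : ℕ} (h : ∀ s : Fin T, (s : ℕ) < n → f s = g s) :
    prefixProd f n = prefixProd g n :=
  prod_congr rfl fun s hs => h s (mem_filter.1 hs).2

theorem prefixProd_pos {f : Fin T → ℝ} (hf : ∀ s, 0 < f s) (n : ℕ) : 0 < prefixProd f n :=
  prod_pos fun s _ => hf s

theorem exp_neg_sum_log_one_div {f : Fin T → ℝ} (hf : ∀ s, 0 < f s) (n : ℕ) :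
    exp (-∑ s ∈ univ.filter (fun s : Fin T => (s : ℕ) < n), log (1 / f s)) = prefixProd f n := by
  simp only [one_div, log_inv, sum_neg_distrib, neg_neg, exp_sum, exp_log (hf _), prefixProd]

end PrefixProd

section Aggregating

variable {I : Type*} [Fintype I] {T : ℕ}

/-- The weight of expert `i` before round `n` in the aggregating algorithm with log-loss, where
`r i s` is the probability expert `i` gave to the outcome of round `s`. -/
noncomputable def posterior (r : I → Fin T → ℝ) (n : ℕ) (i : I) : ℝ :=
  prefixProd (r i) n / ∑ j, prefixProd (r j) n

theorem posterior_congr {r r' : I → Fin T → ℝ} {n : ℕ}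
    (h : ∀ i, ∀ s : Fin T, (s : ℕ) < n → r i s = r' i s) : posterior r n = posterior r' n := by
  funext i
  simp only [posterior, prefixProd_congr (h _)]

variable [Nonempty I] {r : I → Fin T → ℝ}

theorem posterior_pos (hr : ∀ i s, 0 < r i s) (n : ℕ) (i : I) : 0 < posterior r n i :=
  div_pos (prefixProd_pos (hr i) n) (sum_pos (fun j _ => prefixProd_pos (hr j) n) univ_nonempty)

theorem sum_posterior (hr : ∀ i s, 0 < r i s) (n : ℕ) : ∑ i, posterior r n i = 1 := by
  simp only [posterior]
  rw [← sum_div, div_self (sum_pos (fun j _ => prefixProd_pos (hr j) n) univ_nonempty).ne']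

/-- Mixture log-losses telescope to the log-loss of the uniform Bayes mixture, which loses at most
`log |I|` against any single expert. -/
theorem sum_log_sub_log_mixture_le (hr : ∀ i s, 0 < r i s) (istar : I) :
    ∑ t, (log (r istar t) - log (∑ i, posterior r t i * r i t)) ≤ log (Fintype.card I) := by
  set L : ℕ → ℝ := fun n => ∑ i, prefixProd (r i) n
  have hL : ∀ n, 0 < L n := fun n => sum_pos (fun i _ => prefixProd_pos (hr i) n) univ_nonempty
  have hmix : ∀ t : Fin T, log (∑ i, posterior r t i * r i t) = log (L (t + 1)) - log (L t) :=
    fun t => by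
      simp only [L, posterior, div_mul_eq_mul_div, ← sum_div, ← prefixProd_succ]
      exact log_div (hL _).ne' (hL _).ne'
  have htel : ∑ t : Fin T, (log (L (t + 1)) - log (L t)) = log (L T) - log (L 0) := by
    rw [Fin.sum_univ_eq_sum_range (fun n => log (L (n + 1)) - log (L n))]
    exact sum_range_sub (fun n => log (L n)) T
  have hL0 : L 0 = Fintype.card I := by simp [L, prefixProd_zero]
  have hstar : ∑ t, log (r istar t) ≤ log (L T) := by
    rw [← log_prod fun t _ => (hr istar t).ne', ← prefixProd_top]
    exact log_le_log (prefixProd_pos (hr istar) T)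
      (single_le_sum (fun i _ => (prefixProd_pos (hr i) T).le) (mem_univ istar))
  rw [sum_sub_distrib, sum_congr rfl fun t _ => hmix t, htel, hL0]
  linarith

end Aggregating

section PathMean

variable {Y : Type} {T : ℕ}

def DependsBefore {α : Type*} (n : ℕ) (G : (Fin T → Y) → α) : Prop :=
  ∀ ω ω' : Fin T → Y, (∀ s : Fin T, (s : ℕ) < n → ω s = ω' s) → G ω = G ω'

theorem DependsBefore.mono {α : Type*} {n m : ℕ} {G : (Fin T → Y) → α}
    (hG : DependsBefore n G) (hnm : n ≤ m) : DependsBefore m G :=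
  fun ω ω' h => hG ω ω' fun s hs => h s (hs.trans_le hnm)

theorem DependsBefore.apply_update {α : Type*} {n : ℕ} {G : (Fin T → Y) → α}
    (hG : DependsBefore n G) {u : Fin T} (hu : n ≤ u) (ω : Fin T → Y) (y : Y) :
    G (Function.update ω u y) = G ω :=
  hG _ _ fun s hs => Function.update_of_ne (by rintro rfl; omega) _ _

variable [Fintype Y]

theorem card_mul_sum_apply_self {F : (Fin T → Y) → Y → ℝ} {u : Fin T}
    (hF : ∀ ω y, F (Function.update ω u y) = F ω) :
    Fintype.card Y * ∑ ω, F ω (ω u) = ∑ ω, ∑ y, F ω y := by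
  classical
  set φ : (Fin T → Y) × Y → (Fin T → Y) × Y := fun p => (Function.update p.1 u p.2, p.1 u)
  have hφ : Function.Involutive φ := fun p => by simp [φ]
  calc Fintype.card Y * ∑ ω, F ω (ω u) = ∑ p : (Fin T → Y) × Y, F p.1 (p.1 u) := by
        simp [Fintype.sum_prod_type, mul_sum]
    _ = ∑ p : (Fin T → Y) × Y, F (φ p).1 ((φ p).1 u) :=
        (Equiv.sum_comp (hφ.toPerm φ) fun p => F p.1 (p.1 u)).symm
    _ = ∑ ω, ∑ y, F ω y := by simp [φ, hF, Fintype.sum_prod_type]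

/-- Expectation of `G` when the coordinates `s < n` of the path are drawn successively from the
kernel `κ` and the remaining ones uniformly; `n = T` is the law of the whole process. -/
noncomputable def pathMean (κ : (Fin T → Y) → Fin T → Y → ℝ) (n : ℕ) (G : (Fin T → Y) → ℝ) : ℝ :=
  ((Fintype.card Y : ℝ) ^ (T - n))⁻¹ * ∑ ω, prefixProd (fun s => κ ω s (ω s)) n * G ω

theorem pathMean_top (κ : (Fin T → Y) → Fin T → Y → ℝ) (G : (Fin T → Y) → ℝ) :
    pathMean κ T G = ∑ ω, (∏ t, κ ω t (ω t)) * G ω := by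
  simp [pathMean, prefixProd_top]

theorem pathMean_sum {β : Type*} (κ : (Fin T → Y) → Fin T → Y → ℝ) (n : ℕ) (A : Finset β)
    (G : β → (Fin T → Y) → ℝ) :
    pathMean κ n (fun ω => ∑ b ∈ A, G b ω) = ∑ b ∈ A, pathMean κ n (G b) := by
  simp only [pathMean, mul_sum]
  exact sum_comm

variable {κ : (Fin T → Y) → Fin T → Y → ℝ}

theorem pathMean_mono (hκ0 : ∀ ω t y, 0 ≤ κ ω t y) (n : ℕ) {G G' : (Fin T → Y) → ℝ}
    (h : ∀ ω, G ω ≤ G' ω) : pathMean κ n G ≤ pathMean κ n G' :=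
  mul_le_mul_of_nonneg_left
    (sum_le_sum fun ω _ => mul_le_mul_of_nonneg_left (h ω) (prod_nonneg fun s _ => hκ0 ω s _))
    (by positivity)

variable [Nonempty Y]

theorem pathMean_succ (hκ : ∀ t : Fin T, DependsBefore t (fun ω => κ ω t)) (t : Fin T)
    (G : (Fin T → Y) → ℝ) :
    pathMean κ (t + 1) G = pathMean κ t (fun ω => ∑ y, κ ω t y * G (Function.update ω t y)) := by
  have hweight : DependsBefore t (fun ω => prefixProd (fun s => κ ω s (ω s)) t) :=
    fun ω ω' h => prefixProd_congr fun s hs => by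
      rw [show κ ω s = κ ω' s from hκ s ω ω' fun r hr => h r (hr.trans hs), h s hs]
  have hcoord := card_mul_sum_apply_self (u := t)
    (F := fun ω y => prefixProd (fun s => κ ω s (ω s)) t * κ ω t y * G (Function.update ω t y))
    fun ω y => by simp [hweight.apply_update le_rfl, (hκ t).apply_update le_rfl]
  simp only [Function.update_eq_self] at hcoord
  have hcard : (Fintype.card Y : ℝ) ≠ 0 := Nat.cast_ne_zero.2 Fintype.card_ne_zero
  have hexp : T - t = T - (t + 1) + 1 := by omega
  have hsum : ∑ ω, prefixProd (fun s => κ ω s (ω s)) t * ∑ y, κ ω t y * G (Function.update ω t y)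
      = Fintype.card Y * ∑ ω, prefixProd (fun s => κ ω s (ω s)) (t + 1) * G ω := by
    simp only [prefixProd_succ]
    rw [hcoord]
    simp only [mul_sum, mul_assoc]
  rw [pathMean, pathMean, hsum, hexp, pow_succ, mul_inv, mul_assoc, inv_mul_cancel_left₀ hcard]

theorem pathMean_succ_of_dependsBefore (hκ : ∀ t : Fin T, DependsBefore t (fun ω => κ ω t))
    (hκ1 : ∀ ω t, ∑ y, κ ω t y = 1) {t : Fin T} {G : (Fin T → Y) → ℝ}
    (hG : DependsBefore t G) : pathMean κ (t + 1) G = pathMean κ t G := by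
  simp only [pathMean_succ hκ, hG.apply_update le_rfl, ← sum_mul, hκ1, one_mul]

theorem pathMean_eq_of_dependsBefore (hκ : ∀ t : Fin T, DependsBefore t (fun ω => κ ω t))
    (hκ1 : ∀ ω t, ∑ y, κ ω t y = 1) {n : ℕ} (hn : n ≤ T) {G : (Fin T → Y) → ℝ}
    (hG : DependsBefore n G) : pathMean κ T G = pathMean κ n G := by
  suffices ∀ m, n ≤ m → m ≤ T → pathMean κ m G = pathMean κ n G from this T hn le_rfl
  intro m hnm
  induction m, hnm using Nat.le_induction with
  | base => exact fun _ => rfl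
  | succ m hnm ih =>
    intro hm
    rw [← ih (Nat.le_of_succ_le hm)]
    exact pathMean_succ_of_dependsBefore (t := ⟨m, hm⟩) hκ hκ1 (hG.mono hnm)

theorem pathMean_const (hκ : ∀ t : Fin T, DependsBefore t (fun ω => κ ω t))
    (hκ1 : ∀ ω t, ∑ y, κ ω t y = 1) (c : ℝ) : pathMean κ T (fun _ => c) = c := by
  rw [pathMean_eq_of_dependsBefore hκ hκ1 (Nat.zero_le T) fun _ _ _ => rfl]
  simp [pathMean, prefixProd_zero]

theorem pathMean_tower (hκ : ∀ t : Fin T, DependsBefore t (fun ω => κ ω t))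
    (hκ1 : ∀ ω t, ∑ y, κ ω t y = 1) {t : Fin T} {f : (Fin T → Y) → Y → ℝ}
    (hf : DependsBefore t f) :
    pathMean κ T (fun ω => f ω (ω t)) = pathMean κ T (fun ω => ∑ y, κ ω t y * f ω y) := by
  have hft : DependsBefore (t + 1) (fun ω => f ω (ω t)) := fun ω ω' h => by
    simp only [hf ω ω' fun s hs => h s (by omega), h t (by omega)]
  have hκf : DependsBefore t (fun ω => ∑ y, κ ω t y * f ω y) := fun ω ω' h => by
    simp only [show κ ω t = κ ω' t from hκ t ω ω' h, hf ω ω' h]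
  rw [pathMean_eq_of_dependsBefore hκ hκ1 t.isLt hft, pathMean_succ hκ,
    pathMean_eq_of_dependsBefore hκ hκ1 t.isLt.le hκf]
  simp only [Function.update_self, hf.apply_update le_rfl]

theorem pathMean_sum_sqrt_le (hκ : ∀ t : Fin T, DependsBefore t (fun ω => κ ω t))
    (hκ0 : ∀ ω t y, 0 ≤ κ ω t y) (hκ1 : ∀ ω t, ∑ y, κ ω t y = 1)
    {D : (Fin T → Y) → Fin T → ℝ} (hD : ∀ ω t, 0 ≤ D ω t) :
    pathMean κ T (fun ω => ∑ t, √(D ω t)) ≤ √(T * pathMean κ T (fun ω => ∑ t, D ω t)) := by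
  set P : (Fin T → Y) → ℝ := fun ω => ∏ t, κ ω t (ω t)
  have hP : ∀ ω, 0 ≤ P ω := fun ω => prod_nonneg fun t _ => hκ0 ω t _
  have hP1 : ∑ ω, P ω = 1 := by simpa [pathMean_top] using pathMean_const hκ hκ1 1
  have hcs := sum_mul_sqrt_le_sqrt_sum_mul_sum univ (w := fun q : (Fin T → Y) × Fin T => P q.1)
    (z := fun q => D q.1 q.2) (fun q => hP q.1) fun q => hD q.1 q.2
  simp only [Fintype.sum_prod_type, sum_const, card_univ, Fintype.card_fin, nsmul_eq_mul,
    ← mul_sum, hP1] at hcs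
  simpa [pathMean_top, mul_sum] using hcs

theorem pathMean_sum_discreteKL (hκ : ∀ t : Fin T, DependsBefore t (fun ω => κ ω t))
    (hκ1 : ∀ ω t, ∑ y, κ ω t y = 1) {q : (Fin T → Y) → Fin T → Y → ℝ}
    (hq : ∀ t : Fin T, DependsBefore t (fun ω => q ω t)) :
    pathMean κ T (fun ω => ∑ t, discreteKL (κ ω t) (q ω t))
      = pathMean κ T (fun ω => ∑ t, (log (κ ω t (ω t)) - log (q ω t (ω t)))) := by
  simp only [pathMean_sum]
  refine sum_congr rfl fun t _ => (pathMean_tower hκ hκ1 fun ω ω' h => ?_).symm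
  simp only [show κ ω t = κ ω' t from hκ t ω ω' h, show q ω t = q ω' t from hq t ω ω' h]

theorem pathMean_sum_tvDist_le_of_regret (hκ : ∀ t : Fin T, DependsBefore t (fun ω => κ ω t))
    (hκ0 : ∀ ω t y, 0 < κ ω t y) (hκ1 : ∀ ω t, ∑ y, κ ω t y = 1)
    {q : (Fin T → Y) → Fin T → Y → ℝ} (hq : ∀ t : Fin T, DependsBefore t (fun ω => q ω t))
    (hq0 : ∀ ω t y, 0 < q ω t y) (hq1 : ∀ ω t, ∑ y, q ω t y = 1) {B : ℝ}
    (hB : ∀ ω, ∑ t, (log (κ ω t (ω t)) - log (q ω t (ω t))) ≤ B) :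
    pathMean κ T (fun ω => ∑ t, tvDist (q ω t) (κ ω t)) ≤ √(T * B) := by
  have hκ0' : ∀ ω t y, 0 ≤ κ ω t y := fun ω t y => (hκ0 ω t y).le
  have hKL : pathMean κ T (fun ω => ∑ t, discreteKL (κ ω t) (q ω t)) ≤ B := by
    rw [pathMean_sum_discreteKL hκ hκ1 hq, ← pathMean_const hκ hκ1 B]
    exact pathMean_mono hκ0' T hB
  calc pathMean κ T (fun ω => ∑ t, tvDist (q ω t) (κ ω t))
      ≤ pathMean κ T (fun ω => ∑ t, √(discreteKL (κ ω t) (q ω t))) :=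
        pathMean_mono hκ0' T fun ω => sum_le_sum fun t _ => by
          rw [tvDist_comm]
          exact tvDist_le_sqrt_discreteKL (hκ0 ω t) (hq0 ω t) (hκ1 ω t) (hq1 ω t)
    _ ≤ √(T * pathMean κ T (fun ω => ∑ t, discreteKL (κ ω t) (q ω t))) :=
        pathMean_sum_sqrt_le hκ hκ0' hκ1 fun ω t =>
          discreteKL_nonneg (hκ0 ω t) (hq0 ω t) (hκ1 ω t) (hq1 ω t)
    _ ≤ √(T * B) := sqrt_le_sqrt (mul_le_mul_of_nonneg_left hKL T.cast_nonneg)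

end PathMean

theorem vovk_realizable_tv_general
    (X Y I : Type) [Fintype Y] [Fintype I]
    (T : ℕ)
    (p : I → X → Y → ℝ)
    (hp : ∀ i x' y', 0 < p i x' y')
    (hp1 : ∀ i x', ∑ y' : Y, p i x' y' = 1)
    (istar : I)
    (x : (Fin T → Y) → Fin T → X)
    (hx : ∀ (ω ω' : Fin T → Y) (t : Fin T),
      (∀ s : Fin T, (s : ℕ) < (t : ℕ) → ω s = ω' s) → x ω t = x ω' t)
    (qhat : (Fin T → Y) → Fin T → Y → ℝ)
    (hqhat : ∀ (ω : Fin T → Y) (t : Fin T) (y' : Y), qhat ω t y' =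
      ∑ i : I,
        (Real.exp (-(∑ s ∈ Finset.univ.filter (fun s : Fin T => (s : ℕ) < (t : ℕ)),
            Real.log (1 / p i (x ω s) (ω s)))) /
          ∑ j : I, Real.exp (-(∑ s ∈ Finset.univ.filter (fun s : Fin T => (s : ℕ) < (t : ℕ)),
            Real.log (1 / p j (x ω s) (ω s))))) * p i (x ω t) y') :
    ∑ ω : Fin T → Y, (∏ t : Fin T, p istar (x ω t) (ω t)) *
        (∑ t : Fin T, tvDist (qhat ω t) (fun y' => p istar (x ω t) y'))
      ≤ Real.sqrt (T * Real.log (Fintype.card I)) := by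
  rcases isEmpty_or_nonempty Y with hY | hY
  · rw [sum_eq_zero fun ω _ => by rw [sum_eq_zero fun t _ => isEmptyElim (ω t), mul_zero]]
    positivity
  have : Nonempty I := ⟨istar⟩
  set r : (Fin T → Y) → I → Fin T → ℝ := fun ω i s => p i (x ω s) (ω s)
  have hq : ∀ ω t, qhat ω t = fun y => ∑ i, posterior (r ω) t i * p i (x ω t) y :=
    fun ω t => funext fun y => by
      simp only [hqhat, posterior, exp_neg_sum_log_one_div fun s => hp _ (x ω s) (ω s), r]
  have hq_dep : ∀ t : Fin T, DependsBefore t (fun ω => qhat ω t) := fun t ω ω' h => by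
    have hpost : posterior (r ω) t = posterior (r ω') t := posterior_congr fun i s hs => by
      simp only [r, hx ω ω' s fun s' hs' => h s' (hs'.trans hs), h s hs]
    simp only [hq, hpost, hx ω ω' t h]
  have hq_pos : ∀ ω t y, 0 < qhat ω t y := fun ω t y => by
    rw [hq]
    exact sum_pos (fun i _ => mul_pos (posterior_pos (fun _ _ => hp _ _ _) _ i) (hp _ _ _))
      univ_nonempty
  have hq_sum : ∀ ω t, ∑ y, qhat ω t y = 1 := fun ω t => by
    simp only [hq, sum_comm (γ := Y), ← mul_sum, hp1, mul_one]
    exact sum_posterior (fun _ _ => hp _ _ _) t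
  have h := pathMean_sum_tvDist_le_of_regret (κ := fun ω t => p istar (x ω t))
    (fun t ω ω' h => by simp only [hx ω ω' t h]) (fun _ _ _ => hp _ _ _) (fun _ _ => hp1 _ _)
    hq_dep hq_pos hq_sum fun ω => by
      simpa only [hq] using sum_log_sub_log_mixture_le (r := r ω) (fun _ _ => hp _ _ _) istar
  rwa [pathMean_top] at h

/-- In the realizable setting (outcomes drawn from the expert `istar`, with contexts
chosen adaptively as a function of the history), the predictions of Vovk's
aggregating algorithm converge to the true conditional distributions in total
variation on average:
`E[∑_{t=1}^T TV(q̂^t, p_{i*}(x^t))] ≤ sqrt(T · log |I|)`. -/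
theorem vovk_realizable_tv
    (X Y I : Type) [Fintype X] [Fintype Y] [Fintype I] [Nonempty I]
    (T : ℕ)
    (p : I → X → Y → ℝ)
    (hp : ∀ i x' y', 0 < p i x' y')
    (hp1 : ∀ i x', ∑ y' : Y, p i x' y' = 1)
    (istar : I)
    (x : (Fin T → Y) → Fin T → X)
    (hx : ∀ (ω ω' : Fin T → Y) (t : Fin T),
      (∀ s : Fin T, (s : ℕ) < (t : ℕ) → ω s = ω' s) → x ω t = x ω' t)
    (qhat : (Fin T → Y) → Fin T → Y → ℝ)
    (hqhat : ∀ (ω : Fin T → Y) (t : Fin T) (y' : Y), qhat ω t y' =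
      ∑ i : I,
        (Real.exp (-(∑ s ∈ Finset.univ.filter (fun s : Fin T => (s : ℕ) < (t : ℕ)),
            Real.log (1 / p i (x ω s) (ω s)))) /
          ∑ j : I, Real.exp (-(∑ s ∈ Finset.univ.filter (fun s : Fin T => (s : ℕ) < (t : ℕ)),
            Real.log (1 / p j (x ω s) (ω s))))) * p i (x ω t) y') :
    ∑ ω : Fin T → Y, (∏ t : Fin T, p istar (x ω t) (ω t)) *
        (∑ t : Fin T, tvDist (qhat ω t) (fun y' => p istar (x ω t) y'))
      ≤ Real.sqrt (T * Real.log (Fintype.card I)) :=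
  vovk_realizable_tv_general X Y I T p hp hp1 istar x hx qhat hqhat
end

section
/- Mixed-to-behavioral policy equivalence: there exists a map F from product distributions over deterministic general policies to profiles of behavioral policies such that, for any finite-horizon Markov game and any product distribution σ̃ = (σ̃_1, ..., σ̃_m) over deterministic general policies, the trajectory distribution induced by sampling π_j ~ σ̃_j independently and playing (π_1,...,π_m) equals the trajectory distribution induced by the behavioral policy profile F(σ̃). Concretely, F_j(σ̃_j) assigns to each (history τ_{j,h-1}, state s_h, action a) the conditional probability σ̃_j({π_j : π_j(τ_{j,g}, s_g) = a_{j,g} ∀ g ≤ h}) / σ̃_j({π_j : π_j(τ_{j,g}, s_g) = a_{j,g} ∀ g ≤ h-1}) where a_{j,h} = a (arbitrary when the denominator is zero). -/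
/-- A behavioral (randomized general, history-dependent) policy of a player. -/
abbrev BehPol (S Rt Aj : Type) (H : ℕ) :=
  (h : Fin H) → (Fin (h : ℕ) → S × Aj × Rt) → S → Aj → ℝ

/-- A deterministic general (history-dependent) policy of a player. -/
abbrev DetPol (S Rt Aj : Type) (H : ℕ) :=
  (h : Fin H) → (Fin (h : ℕ) → S × Aj × Rt) → S → Aj

/-- Player `j`'s history up to step `h`, extracted from the full trajectory `τ`
using the deterministic reward functions `Rw`. -/
def histOf {S Rt : Type} {m H : ℕ} {A : Fin m → Type}
    (Rw : Fin H → S → ((j : Fin m) → A j) → Fin m → Rt)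
    (τ : Fin H → S × ((j : Fin m) → A j)) (j : Fin m) (h : Fin H) :
    Fin (h : ℕ) → S × A j × Rt :=
  fun g =>
    let g' : Fin H := ⟨g, g.isLt.trans h.isLt⟩
    ((τ g').1, (τ g').2 j, Rw g' (τ g').1 (τ g').2 j)

/-- Environment contribution to the probability of trajectory `τ`. -/
noncomputable def envProb {S : Type} {m H : ℕ} {A : Fin m → Type}
    (μ : S → ℝ) (Pt : Fin H → S → ((j : Fin m) → A j) → S → ℝ)
    (τ : Fin H → S × ((j : Fin m) → A j)) : ℝ :=
  (∏ h : Fin H, if (h : ℕ) = 0 then μ (τ h).1 else 1) *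
  ∏ h : Fin H,
    if hs : (h : ℕ) + 1 < H then Pt h (τ h).1 (τ h).2 (τ ⟨(h : ℕ) + 1, hs⟩).1 else 1

/-- `πj` is consistent with the history `hist` up to step `h`: at every earlier step
`g < h`, the action `πj` prescribes for the prefix of `hist` equals the action
recorded in `hist`. -/
def consistentUpTo {S Rt Aj : Type} {H : ℕ} (πj : DetPol S Rt Aj H)
    (h : Fin H) (hist : Fin (h : ℕ) → S × Aj × Rt) : Prop :=
  ∀ g : Fin (h : ℕ),
    πj ⟨g, g.isLt.trans h.isLt⟩
        (fun g' => hist ⟨g', g'.isLt.trans g.isLt⟩) (hist g).1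
      = (hist g).2.1

open scoped Classical in
/-- The mixed-to-behavioral map `F_j`: given a distribution `σt` over deterministic
general policies, the behavioral probability of playing `a` at (history `hist`,
state `s`, step `h`) is the conditional probability (under `σt`) that the sampled
policy is consistent with `hist` and plays `a`, given consistency with `hist`
(Lean's junk value `0` when the denominator vanishes plays the role of an
arbitrary choice). -/
noncomputable def mixedToBeh {S Rt Aj : Type} [Fintype S] [Fintype Rt] [Fintype Aj]
    [DecidableEq S] [DecidableEq Rt] [DecidableEq Aj] {H : ℕ}
    (σt : DetPol S Rt Aj H → ℝ) : BehPol S Rt Aj H :=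
  fun h hist s a =>
    (∑ πj ∈ Finset.univ.filter (fun πj : DetPol S Rt Aj H =>
        consistentUpTo πj h hist ∧ πj h hist s = a), σt πj) /
    (∑ πj ∈ Finset.univ.filter (fun πj : DetPol S Rt Aj H =>
        consistentUpTo πj h hist), σt πj)

/-! For one player, the events "the sampled policy reproduces the first `n` actions of the
trajectory" decrease in `n`, and `mixedToBeh` at step `h` is the conditional probability of
event `h + 1` given event `h`. The product of these conditionals telescopes to the probability
of reproducing every action; a vanishing denominator does no harm, because every later event is
then null as well. Since the players sample independently and the environment factor does not
depend on the policies, the mixed trajectory probability factors over the players into exactly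
these per-player probabilities. -/
namespace Finset

theorem prod_range_div₀ {G₀ : Type*} [CommGroupWithZero G₀] (f : ℕ → G₀) (h0 : f 0 ≠ 0)
    (hf : ∀ n, f n = 0 → f (n + 1) = 0) (n : ℕ) :
    ∏ i ∈ range n, f (i + 1) / f i = f n / f 0 := by
  induction n with
  | zero => simp [h0]
  | succ n ih =>
    rw [prod_range_succ, ih]
    by_cases hn : f n = 0
    · simp [hn, hf n hn]
    · exact div_mul_div_cancel₀' hn _ _

end Finset

open Finset

section SinglePlayer

variable {S Rt Aj : Type} {H : ℕ}

def obsPrefix (ω : Fin H → S × Aj × Rt) (h : Fin H) : Fin (h : ℕ) → S × Aj × Rt :=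
  fun g => ω ⟨g, g.isLt.trans h.isLt⟩

def PlaysAlong (π : DetPol S Rt Aj H) (ω : Fin H → S × Aj × Rt) (n : ℕ) : Prop :=
  ∀ g : Fin H, (g : ℕ) < n → π g (obsPrefix ω g) (ω g).1 = (ω g).2.1

variable {π : DetPol S Rt Aj H} {ω : Fin H → S × Aj × Rt}

theorem consistentUpTo_obsPrefix_iff (h : Fin H) :
    consistentUpTo π h (obsPrefix ω h) ↔ PlaysAlong π ω h :=
  ⟨fun hc g hg => hc ⟨g, hg⟩, fun hc g => hc _ g.isLt⟩

theorem playsAlong_succ_iff (h : Fin H) :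
    PlaysAlong π ω (h + 1) ↔
      PlaysAlong π ω h ∧ π h (obsPrefix ω h) (ω h).1 = (ω h).2.1 := by
  refine ⟨fun hp => ⟨fun g hg => hp g (by omega), hp h (by omega)⟩, ?_⟩
  rintro ⟨hp, hh⟩ g hg
  rcases Nat.lt_succ_iff_lt_or_eq.mp hg with hlt | heq
  · exact hp g hlt
  · rwa [Fin.ext heq]

theorem PlaysAlong.mono {n n' : ℕ} (hn : n ≤ n') (hp : PlaysAlong π ω n') :
    PlaysAlong π ω n :=
  fun g hg => hp g (hg.trans_le hn)

theorem playsAlong_zero : PlaysAlong π ω 0 := fun _ hg => absurd hg (Nat.not_lt_zero _)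

theorem playsAlong_horizon_iff :
    PlaysAlong π ω H ↔ ∀ h : Fin H, π h (obsPrefix ω h) (ω h).1 = (ω h).2.1 :=
  ⟨fun hp h => hp h h.isLt, fun hp h _ => hp h⟩

end SinglePlayer

section SinglePlayerMass

variable {S Rt Aj : Type} {H : ℕ} [Fintype S] [Fintype Rt] [Fintype Aj] [DecidableEq S]
  [DecidableEq Rt] [DecidableEq Aj] (σ : DetPol S Rt Aj H → ℝ) (ω : Fin H → S × Aj × Rt)

open scoped Classical in
noncomputable def massAlong (n : ℕ) : ℝ :=
  ∑ π ∈ univ.filter (fun π => PlaysAlong π ω n), σ π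

theorem mixedToBeh_obsPrefix (h : Fin H) :
    mixedToBeh σ h (obsPrefix ω h) (ω h).1 (ω h).2.1
      = massAlong σ ω (h + 1) / massAlong σ ω h := by
  simp only [mixedToBeh, massAlong]
  congr 3 <;> funext π <;> simp only [consistentUpTo_obsPrefix_iff, playsAlong_succ_iff]

theorem massAlong_zero (hσ : ∑ π, σ π = 1) : massAlong σ ω 0 = 1 := by
  simp [massAlong, playsAlong_zero, hσ]

open scoped Classical in
theorem massAlong_succ_eq_zero (hσ : ∀ π, 0 ≤ σ π) {n : ℕ} (hn : massAlong σ ω n = 0) :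
    massAlong σ ω (n + 1) = 0 := by
  refine le_antisymm (hn ▸ ?_) (sum_nonneg fun π _ => hσ π)
  exact sum_le_sum_of_subset_of_nonneg
    (monotone_filter_right _ fun π _ (hp : PlaysAlong π ω (n + 1)) => hp.mono n.le_succ)
    fun π _ _ => hσ π

theorem sum_mul_prod_ite_eq_massAlong :
    ∑ π, σ π * ∏ h : Fin H,
        (if π h (obsPrefix ω h) (ω h).1 = (ω h).2.1 then (1 : ℝ) else 0)
      = massAlong σ ω H := by
  simp only [massAlong, sum_filter, prod_boole, mem_univ, true_implies,
    playsAlong_horizon_iff, mul_ite, mul_one, mul_zero]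

theorem sum_mul_prod_ite_eq_prod_mixedToBeh (hσ0 : ∀ π, 0 ≤ σ π) (hσ1 : ∑ π, σ π = 1) :
    ∑ π, σ π * ∏ h : Fin H,
        (if π h (obsPrefix ω h) (ω h).1 = (ω h).2.1 then (1 : ℝ) else 0)
      = ∏ h : Fin H, mixedToBeh σ h (obsPrefix ω h) (ω h).1 (ω h).2.1 := by
  have h0 := massAlong_zero σ ω hσ1
  rw [sum_mul_prod_ite_eq_massAlong, prod_congr rfl fun h _ => mixedToBeh_obsPrefix σ ω h,
    Fin.prod_univ_eq_prod_range (fun n => massAlong σ ω (n + 1) / massAlong σ ω n),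
    prod_range_div₀ (massAlong σ ω) (by rw [h0]; exact one_ne_zero)
      (fun _ => massAlong_succ_eq_zero σ ω hσ0), h0, div_one]

end SinglePlayerMass

theorem mixed_to_behavioral_trajectory_general
    (S Rt : Type) [Fintype S] [DecidableEq S] [Fintype Rt] [DecidableEq Rt]
    (m H : ℕ) (A : Fin m → Type) [∀ j, Fintype (A j)] [∀ j, DecidableEq (A j)]
    (μ : S → ℝ)
    (Pt : Fin H → S → ((j : Fin m) → A j) → S → ℝ)
    (Rw : Fin H → S → ((j : Fin m) → A j) → Fin m → Rt)
    (σt : (j : Fin m) → DetPol S Rt (A j) H → ℝ)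
    (hσt : ∀ j, (∀ πj, 0 ≤ σt j πj) ∧ ∑ πj, σt j πj = 1)
    (τ : Fin H → S × ((j : Fin m) → A j)) :
    ∑ π : (j : Fin m) → DetPol S Rt (A j) H,
        (∏ j, σt j (π j)) *
          (envProb μ Pt τ * ∏ h : Fin H, ∏ j : Fin m,
            (if π j h (histOf Rw τ j h) (τ h).1 = (τ h).2 j then (1 : ℝ) else 0))
      = envProb μ Pt τ *
          ∏ h : Fin H, ∏ j : Fin m,
            mixedToBeh (σt j) h (histOf Rw τ j h) (τ h).1 ((τ h).2 j) := by
  -- `histOf Rw τ j` is `obsPrefix (ω j)` by definition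
  let ω (j : Fin m) (h : Fin H) : S × A j × Rt := ((τ h).1, (τ h).2 j, Rw h (τ h).1 (τ h).2 j)
  have hsingle (j : Fin m) :=
    sum_mul_prod_ite_eq_prod_mixedToBeh (σt j) (ω j) (hσt j).1 (hσt j).2
  calc _ = envProb μ Pt τ * ∏ j, ∑ πj, σt j πj * ∏ h : Fin H,
          (if πj h (histOf Rw τ j h) (τ h).1 = (τ h).2 j then (1 : ℝ) else 0) := by
        rw [Fintype.prod_sum, mul_sum]
        refine sum_congr rfl fun π _ => ?_
        rw [prod_mul_distrib, prod_comm (s := univ (α := Fin H))]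
        ring
    _ = _ := by
        rw [prod_comm (s := univ (α := Fin H))]
        exact congrArg _ (prod_congr rfl fun j _ => hsingle j)

/-- Kuhn's theorem, mixed-to-behavioral direction, for finite-horizon Markov games:
for any product distribution `σt` over deterministic general policies, the probability
of any full trajectory `τ` under independently sampling `π j ~ σt j` equals the
probability of `τ` under the behavioral policy profile `F(σt)` given by
`mixedToBeh`. -/
theorem mixed_to_behavioral_trajectory
    (S Rt : Type) [Fintype S] [DecidableEq S] [Fintype Rt] [DecidableEq Rt]
    (m H : ℕ) (A : Fin m → Type) [∀ j, Fintype (A j)] [∀ j, DecidableEq (A j)]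
    (μ : S → ℝ) (hμ : (∀ s, 0 ≤ μ s) ∧ ∑ s, μ s = 1)
    (Pt : Fin H → S → ((j : Fin m) → A j) → S → ℝ)
    (hPt : ∀ h s a, (∀ s', 0 ≤ Pt h s a s') ∧ ∑ s', Pt h s a s' = 1)
    (Rw : Fin H → S → ((j : Fin m) → A j) → Fin m → Rt)
    (σt : (j : Fin m) → DetPol S Rt (A j) H → ℝ)
    (hσt : ∀ j, (∀ πj, 0 ≤ σt j πj) ∧ ∑ πj, σt j πj = 1)
    (τ : Fin H → S × ((j : Fin m) → A j)) :
    ∑ π : (j : Fin m) → DetPol S Rt (A j) H,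
        (∏ j, σt j (π j)) *
          (envProb μ Pt τ * ∏ h : Fin H, ∏ j : Fin m,
            (if π j h (histOf Rw τ j h) (τ h).1 = (τ h).2 j then (1 : ℝ) else 0))
      = envProb μ Pt τ *
          ∏ h : Fin H, ∏ j : Fin m,
            mixedToBeh (σt j) h (histOf Rw τ j h) (τ h).1 ((τ h).2 j) :=
  mixed_to_behavioral_trajectory_general S Rt m H A μ Pt Rw σt hσt τ
end
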